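/- arXiv:1701.06640 — 2 statements merged into one kernel-verified Lean document; each statement's English description precedes it below -/
import Mathlib

section
/- For positive integers k1 < k2, the infimum of the set Δ0 = { Σ_{n≥1} 2(-1)^{n-1}/2^{a1+...+an} : each a_i ∈ {k1, k2} } equals 2(2^{k1} - 1)/(2^{k1+k2} - 1), attained by the alternating sequence a1=k2, a2=k1, a3=k2, .... -/
open Filter Topology

/-- Partial sum `a 0 + ... + a n` of a digit sequence. -/
noncomputable def psum (a : ℕ → ℕ) (n : ℕ) : ℕ := ∑ i ∈ Finset.range (n + 1), a i

/-- Value of the alternating series `Σ_{n≥1} 2(-1)^{n-1}/2^{a1+...+an}`. -/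
noncomputable def val (a : ℕ → ℕ) : ℝ := ∑' n : ℕ, (2 * (-1 : ℝ) ^ n) / 2 ^ (psum a n)

/-- The set `Δ0` of all values of the alternating series over `K`-valued digit sequences. -/
noncomputable def Delta0 (K : Set ℕ) : Set ℝ :=
  { y | ∃ a : ℕ → ℕ, (∀ i, a i ∈ K) ∧ y = val a }

/-!
Dropping the first digit gives `val a = (2 - val a') / 2 ^ a 0` with `a' n = a (n + 1)`, and
since the terms of the series decrease in absolute value, `0 ≤ val a ≤ 1`. For digits in
`[k1, k2]`, two steps of this recursion show that the infimum `m` of all values satisfies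
`(2 - (2 - m) / 2 ^ k1) / 2 ^ k2 ≤ m`, so `m` lies above the fixed point of this contraction,
which is the claimed bound. The sequence `k2, k1, k2, …` is invariant under dropping two digits,
so its value is that fixed point.
-/

section Series

variable {a : ℕ → ℕ}

lemma psum_succ (a : ℕ → ℕ) (n : ℕ) : psum a (n + 1) = psum a n + a (n + 1) :=
  Finset.sum_range_succ _ _

lemma psum_succ' (a : ℕ → ℕ) (n : ℕ) :
    psum a (n + 1) = a 0 + psum (fun i => a (i + 1)) n := by
  rw [psum, Finset.sum_range_succ', add_comm]
  rfl

lemma monotone_psum (a : ℕ → ℕ) : Monotone (psum a) :=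
  monotone_nat_of_le_succ fun n => (psum_succ a n).symm ▸ Nat.le_add_right _ _

lemma le_psum (h : ∀ i, 1 ≤ a i) (n : ℕ) : n + 1 ≤ psum a n := by
  simpa [psum] using Finset.sum_le_sum fun i (_ : i ∈ Finset.range (n + 1)) => h i

noncomputable def valTerm (a : ℕ → ℕ) (n : ℕ) : ℝ := 2 / 2 ^ psum a n

lemma valTerm_zero (a : ℕ → ℕ) : valTerm a 0 = 2 / 2 ^ a 0 := by
  simp [valTerm, psum]

lemma antitone_valTerm (a : ℕ → ℕ) : Antitone (valTerm a) := fun _ _ hmn =>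
  div_le_div_of_nonneg_left zero_le_two (by positivity)
    (pow_le_pow_right₀ one_le_two (monotone_psum a hmn))

lemma summable_valTerm (h : ∀ i, 1 ≤ a i) : Summable (valTerm a) := by
  refine (summable_geometric_two.mul_left 2).of_nonneg_of_le
    (fun n => by unfold valTerm; positivity) fun n => ?_
  rw [valTerm, one_div_pow, ← div_eq_mul_one_div]
  exact div_le_div_of_nonneg_left zero_le_two (by positivity)
    (pow_le_pow_right₀ one_le_two (by linarith [le_psum h n]))

lemma val_eq_tsum_valTerm (a : ℕ → ℕ) : val a = ∑' n, (-1 : ℝ) ^ n * valTerm a n :=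
  tsum_congr fun n => by rw [valTerm, mul_div_assoc']; ring

lemma val_nonneg (h : ∀ i, 1 ≤ a i) : 0 ≤ val a := by
  rw [val_eq_tsum_valTerm]
  simpa using (antitone_valTerm a).alternating_series_le_tendsto
    (summable_valTerm h).tendsto_alternating_series_tsum 0

lemma val_le_one (h : ∀ i, 1 ≤ a i) : val a ≤ 1 := by
  have hfirst : val a ≤ 2 / 2 ^ a 0 := by
    rw [val_eq_tsum_valTerm]
    simpa [valTerm_zero] using (antitone_valTerm a).tendsto_le_alternating_series
      (summable_valTerm h).tendsto_alternating_series_tsum 0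
  refine hfirst.trans ((div_le_one (by positivity)).2 ?_)
  simpa using pow_le_pow_right₀ one_le_two (h 0)

lemma val_eq_two_sub_val_tail_div (h : ∀ i, 1 ≤ a i) :
    val a = (2 - val (fun n => a (n + 1))) / 2 ^ a 0 := by
  have hshift : ∀ n, (-1 : ℝ) ^ (n + 1) * valTerm a (n + 1) =
      -((-1) ^ n * valTerm (fun i => a (i + 1)) n / 2 ^ a 0) := fun n => by
    rw [valTerm, valTerm, psum_succ', pow_add, pow_succ]
    field_simp
    ring
  rw [val_eq_tsum_valTerm, (summable_valTerm h).alternating.tsum_eq_zero_add, tsum_congr hshift,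
    tsum_neg, tsum_div_const, ← val_eq_tsum_valTerm]
  rw [pow_zero, one_mul, valTerm_zero, sub_div]
  ring

lemma val_le_of_le_val_tail {k : ℕ} {m : ℝ} (h : ∀ i, 1 ≤ a i) (hk : k ≤ a 0)
    (hm : m ≤ val (fun n => a (n + 1))) : val a ≤ (2 - m) / 2 ^ k := by
  rw [val_eq_two_sub_val_tail_div h]
  have hle := val_le_one fun i => h (i + 1)
  exact div_le_div₀ (by linarith) (by linarith) (by positivity)
    (pow_le_pow_right₀ one_le_two hk)

lemma le_val_of_val_tail_le {k : ℕ} {M : ℝ} (h : ∀ i, 1 ≤ a i) (hk : a 0 ≤ k)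
    (hM : val (fun n => a (n + 1)) ≤ M) : (2 - M) / 2 ^ k ≤ val a := by
  rw [val_eq_two_sub_val_tail_div h]
  have hle := val_le_one fun i => h (i + 1)
  exact div_le_div₀ (by linarith) (by linarith) (by positivity)
    (pow_le_pow_right₀ one_le_two hk)

end Series

lemma val_tail_mem_Delta0 {K : Set ℕ} {a : ℕ → ℕ} (ha : ∀ i, a i ∈ K) :
    val (fun n => a (n + 1)) ∈ Delta0 K :=
  ⟨_, fun i => ha (i + 1), rfl⟩

theorem mem_lowerBounds_Delta0 {K : Set ℕ} {k1 k2 : ℕ} (hk1 : 0 < k1) (hK : K ⊆ Set.Icc k1 k2) :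
    2 * ((2 : ℝ) ^ k1 - 1) / ((2 : ℝ) ^ (k1 + k2) - 1) ∈ lowerBounds (Delta0 K) := by
  rintro _ ⟨a, ha, rfl⟩
  set m := sInf (Delta0 K)
  have one_le : ∀ b : ℕ → ℕ, (∀ i, b i ∈ K) → ∀ i, 1 ≤ b i :=
    fun b hb i => hk1.trans_le (hK (hb i)).1
  have hbdd : BddBelow (Delta0 K) :=
    ⟨0, by rintro _ ⟨b, hb, rfl⟩; exact val_nonneg (one_le b hb)⟩
  have two_steps : (2 - (2 - m) / 2 ^ k1) / 2 ^ k2 ≤ m := by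
    refine le_csInf ⟨_, a, ha, rfl⟩ ?_
    rintro _ ⟨b, hb, rfl⟩
    refine le_val_of_val_tail_le (one_le b hb) (hK (hb 0)).2 ?_
    refine val_le_of_le_val_tail (fun i => one_le b hb (i + 1)) (hK (hb 1)).1 ?_
    exact csInf_le hbdd (val_tail_mem_Delta0 (a := fun n => b (n + 1)) fun i => hb (i + 1))
  have hP : (2 : ℝ) ≤ 2 ^ k1 := by simpa using pow_le_pow_right₀ one_le_two hk1
  have hQ : (1 : ℝ) ≤ 2 ^ k2 := one_le_pow₀ one_le_two
  have fixed_point : 2 * 2 ^ k1 - 2 + m ≤ m * (2 ^ k1 * 2 ^ k2) := by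
    have := (div_le_iff₀ (by positivity)).1 two_steps
    rw [sub_div' (by positivity), div_le_iff₀ (by positivity)] at this
    linarith
  calc 2 * ((2 : ℝ) ^ k1 - 1) / ((2 : ℝ) ^ (k1 + k2) - 1) ≤ m := by
        rw [pow_add, div_le_iff₀ (by nlinarith)]
        linarith
    _ ≤ val a := csInf_le hbdd ⟨a, ha, rfl⟩

theorem val_alternating {k1 k2 : ℕ} (hk1 : 0 < k1) (hk2 : 0 < k2) :
    val (fun n => if n % 2 = 0 then k2 else k1) =
      2 * ((2 : ℝ) ^ k1 - 1) / ((2 : ℝ) ^ (k1 + k2) - 1) := by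
  set b : ℕ → ℕ := fun n => if n % 2 = 0 then k2 else k1
  have one_le : ∀ i, 1 ≤ b i := fun i => by dsimp only [b]; split_ifs <;> omega
  have periodic : (fun n => b (n + 1 + 1)) = b :=
    funext fun n => by simp only [b, Nat.add_assoc, Nat.add_mod_right]
  have h0 : val b = (2 - val (fun n => b (n + 1))) / 2 ^ k2 :=
    val_eq_two_sub_val_tail_div one_le
  have h1 : val (fun n => b (n + 1)) = (2 - val b) / 2 ^ k1 := by
    have := val_eq_two_sub_val_tail_div fun i => one_le (i + 1)
    rwa [periodic] at this
  generalize val b = v at h0 h1 ⊢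
  generalize val (fun n => b (n + 1)) = w at h0 h1
  have hP : (2 : ℝ) ≤ 2 ^ k1 := by simpa using pow_le_pow_right₀ one_le_two hk1
  have hQ : (2 : ℝ) ≤ 2 ^ k2 := by simpa using pow_le_pow_right₀ one_le_two hk2
  rw [eq_div_iff (by positivity)] at h0 h1
  rw [pow_add, eq_div_iff (by nlinarith)]
  linear_combination 2 ^ k1 * h0 - h1

theorem inf_Delta0 (k1 k2 : ℕ) (hk1 : 0 < k1) (hk : k1 < k2) :
    IsLeast (Delta0 {k1, k2}) (2 * ((2 : ℝ) ^ k1 - 1) / ((2 : ℝ) ^ (k1 + k2) - 1)) ∧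
    val (fun n => if n % 2 = 0 then k2 else k1) =
      2 * ((2 : ℝ) ^ k1 - 1) / ((2 : ℝ) ^ (k1 + k2) - 1) := by
  have hval := val_alternating hk1 (hk1.trans hk)
  have digits_mem : ∀ i, (if i % 2 = 0 then k2 else k1) ∈ ({k1, k2} : Set ℕ) := fun i => by
    split_ifs <;> simp
  have digits_subset : ({k1, k2} : Set ℕ) ⊆ Set.Icc k1 k2 := by
    rintro k (rfl | rfl) <;> constructor <;> omega
  exact ⟨⟨⟨_, digits_mem, hval.symm⟩, mem_lowerBounds_Delta0 hk1 digits_subset⟩, hval⟩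
end

section
/- For positive integers k1 < k2, the supremum of the set D_even = { 1/2^{b1} − 1/2^{b1+b2} + 1/2^{b1+b2+b3} − ... : b_i ∈ {k1, k2} } equals (2^{k2} − 1)/(2^{k1+k2} − 1), and its infimum equals (2^{k1} − 1)/(2^{k1+k2} − 1); hence its diameter is (2^{k2} − 2^{k1})/(2^{k1+k2} − 1). -/
open Filter Topology

/-- Value of the series over m ≥ 1 of (-1)^(m-1) / 2^(b1+...+bm). -/
noncomputable def valEven (b : ℕ → ℕ) : ℝ := ∑' m : ℕ, (-1 : ℝ) ^ m / 2 ^ (psum b m)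

noncomputable def Deven (K : Set ℕ) : Set ℝ :=
  { y | ∃ b : ℕ → ℕ, (∀ i, b i ∈ K) ∧ y = valEven b }

/-!
Every value is `(1 - z) / 2 ^ k` with `k ∈ K` and `z` again a value (the tail of the series).
Hence `S = sup D_even` and `I = inf D_even` satisfy `S ≤ (1 - I) / 2 ^ k1` and
`(1 - S) / 2 ^ k2 ≤ I`, which puts `S` below and `I` above the solution of the corresponding
equations. That solution is attained by the alternating sequences `k1, k2, k1, …` and
`k2, k1, k2, …`. For a bounded set of reals the diameter is `S - I`.
-/

section Series

variable {b : ℕ → ℕ}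

lemma psum_succ_eq_add_psum_tail (m : ℕ) :
    psum b (m + 1) = b 0 + psum (fun i => b (i + 1)) m := by
  simp only [psum]
  rw [Finset.sum_range_succ' b (m + 1), add_comm]

lemma le_psum_s4 (hb : ∀ i, 1 ≤ b i) (m : ℕ) : m + 1 ≤ psum b m := by
  simpa [psum] using Finset.sum_le_sum fun i (_ : i ∈ Finset.range (m + 1)) => hb i

lemma norm_valEven_term_le (hb : ∀ i, 1 ≤ b i) (m : ℕ) :
    ‖(-1 : ℝ) ^ m / 2 ^ psum b m‖ ≤ 1 / 2 / 2 ^ m := by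
  rw [norm_div, norm_pow, norm_neg, norm_one, one_pow, norm_pow, Real.norm_two, div_div,
    ← pow_succ']
  exact one_div_le_one_div_of_le (by positivity) (pow_le_pow_right₀ one_le_two (le_psum_s4 hb m))

lemma summable_valEven_term (hb : ∀ i, 1 ≤ b i) :
    Summable fun m => (-1 : ℝ) ^ m / 2 ^ psum b m :=
  .of_norm_bounded (summable_geometric_two' 1) (norm_valEven_term_le hb)

lemma abs_valEven_le_one (hb : ∀ i, 1 ≤ b i) : |valEven b| ≤ 1 :=
  calc |valEven b| ≤ ∑' m : ℕ, 1 / 2 / 2 ^ m :=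
        tsum_of_norm_bounded (summable_geometric_two' 1).hasSum (norm_valEven_term_le hb)
    _ = 1 := tsum_geometric_two' 1

lemma valEven_eq_one_sub_valEven_tail_div (hb : ∀ i, 1 ≤ b i) :
    valEven b = (1 - valEven (fun i => b (i + 1))) / 2 ^ b 0 := by
  have tail_term : ∀ m, (-1 : ℝ) ^ (m + 1) / 2 ^ psum b (m + 1) =
      -((-1) ^ m / 2 ^ psum (fun i => b (i + 1)) m / 2 ^ b 0) := fun m => by
    rw [psum_succ_eq_add_psum_tail, pow_add, pow_succ]
    ring
  rw [valEven, (summable_valEven_term hb).tsum_eq_zero_add, valEven]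
  simp only [tail_term, tsum_neg, tsum_div_const]
  simp only [psum, zero_add, Finset.range_one, Finset.sum_singleton, pow_zero]
  ring

end Series

section Deven

variable {K : Set ℕ}

lemma Deven_nonempty (hne : K.Nonempty) : (Deven K).Nonempty :=
  let ⟨k, hk⟩ := hne
  ⟨_, fun _ => k, fun _ => hk, rfl⟩

lemma Deven_subset_Icc (hK : ∀ k ∈ K, 1 ≤ k) : Deven K ⊆ Set.Icc (-1) 1 := by
  rintro _ ⟨b, hb, rfl⟩
  exact abs_le.mp (abs_valEven_le_one fun i => hK _ (hb i))

lemma isBounded_Deven (hK : ∀ k ∈ K, 1 ≤ k) : Bornology.IsBounded (Deven K) :=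
  Metric.isBounded_Icc (-1 : ℝ) 1 |>.subset (Deven_subset_Icc hK)

lemma exists_eq_one_sub_div_of_mem_Deven (hK : ∀ k ∈ K, 1 ≤ k) {y : ℝ} (hy : y ∈ Deven K) :
    ∃ k ∈ K, ∃ z ∈ Deven K, y = (1 - z) / 2 ^ k := by
  obtain ⟨b, hb, rfl⟩ := hy
  exact ⟨b 0, hb 0, _, ⟨_, fun i => hb (i + 1), rfl⟩,
    valEven_eq_one_sub_valEven_tail_div fun i => hK _ (hb i)⟩

lemma sSup_Deven_le (hK : ∀ k ∈ K, 1 ≤ k) (hne : K.Nonempty) {k₁ : ℕ} (hk₁ : ∀ k ∈ K, k₁ ≤ k) :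
    sSup (Deven K) ≤ (1 - sInf (Deven K)) / 2 ^ k₁ := by
  refine csSup_le (Deven_nonempty hne) fun y hy => ?_
  obtain ⟨k, hk, z, hz, rfl⟩ := exists_eq_one_sub_div_of_mem_Deven hK hy
  have hz1 : 0 ≤ 1 - z := sub_nonneg.mpr (Deven_subset_Icc hK hz).2
  calc (1 - z) / 2 ^ k ≤ (1 - z) / 2 ^ k₁ :=
        div_le_div_of_nonneg_left hz1 (by positivity) (pow_le_pow_right₀ one_le_two (hk₁ k hk))
    _ ≤ (1 - sInf (Deven K)) / 2 ^ k₁ := by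
        gcongr
        exact csInf_le (isBounded_Deven hK).bddBelow hz

lemma le_sInf_Deven (hK : ∀ k ∈ K, 1 ≤ k) (hne : K.Nonempty) {k₂ : ℕ} (hk₂ : ∀ k ∈ K, k ≤ k₂) :
    (1 - sSup (Deven K)) / 2 ^ k₂ ≤ sInf (Deven K) := by
  refine le_csInf (Deven_nonempty hne) fun y hy => ?_
  obtain ⟨k, hk, z, hz, rfl⟩ := exists_eq_one_sub_div_of_mem_Deven hK hy
  have hz1 : 0 ≤ 1 - z := sub_nonneg.mpr (Deven_subset_Icc hK hz).2
  calc (1 - sSup (Deven K)) / 2 ^ k₂ ≤ (1 - z) / 2 ^ k₂ := by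
        gcongr
        exact le_csSup (isBounded_Deven hK).bddAbove hz
    _ ≤ (1 - z) / 2 ^ k :=
        div_le_div_of_nonneg_left hz1 (by positivity) (pow_le_pow_right₀ one_le_two (hk₂ k hk))

end Deven

def alternating (k₁ k₂ : ℕ) (i : ℕ) : ℕ := if Even i then k₁ else k₂

lemma alternating_succ (k₁ k₂ i : ℕ) : alternating k₁ k₂ (i + 1) = alternating k₂ k₁ i := by
  by_cases h : Even i <;> simp [alternating, h, Nat.even_add_one]

@[simp]
lemma alternating_zero (k₁ k₂ : ℕ) : alternating k₁ k₂ 0 = k₁ := if_pos Even.zero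

lemma alternating_mem (k₁ k₂ i : ℕ) : alternating k₁ k₂ i ∈ ({k₁, k₂} : Set ℕ) := by
  unfold alternating
  split_ifs <;> simp

lemma one_le_alternating {k₁ k₂ : ℕ} (h₁ : 1 ≤ k₁) (h₂ : 1 ≤ k₂) (i : ℕ) :
    1 ≤ alternating k₁ k₂ i := by
  unfold alternating
  split_ifs <;> assumption

lemma valEven_alternating {k₁ k₂ : ℕ} (h₁ : 1 ≤ k₁) (h₂ : 1 ≤ k₂) :
    valEven (alternating k₁ k₂) = ((2 : ℝ) ^ k₂ - 1) / ((2 : ℝ) ^ (k₁ + k₂) - 1) := by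
  have e₁ := valEven_eq_one_sub_valEven_tail_div (one_le_alternating h₁ h₂)
  have e₂ := valEven_eq_one_sub_valEven_tail_div (one_le_alternating h₂ h₁)
  simp only [alternating_succ, alternating_zero] at e₁ e₂
  have hD : (2 : ℝ) ^ (k₁ + k₂) - 1 ≠ 0 :=
    (sub_pos.mpr (one_lt_pow₀ one_lt_two (by omega))).ne'
  rw [eq_div_iff hD, pow_add]
  rw [eq_div_iff (by positivity)] at e₁ e₂
  linear_combination (2 : ℝ) ^ k₂ * e₁ - e₂

lemma eq_of_recursive_bounds {S I x y : ℝ} (hx : 0 < x) (hy : 0 < y) (hxy : 1 < x * y)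
    (hS : S ≤ (1 - I) / x) (hI : (1 - S) / y ≤ I)
    (hSge : (y - 1) / (x * y - 1) ≤ S) (hIle : I ≤ (x - 1) / (x * y - 1)) :
    S = (y - 1) / (x * y - 1) ∧ I = (x - 1) / (x * y - 1) := by
  have hD : 0 < x * y - 1 := sub_pos.mpr hxy
  rw [le_div_iff₀ hx] at hS
  rw [div_le_iff₀ hy] at hI
  rw [div_le_iff₀ hD] at hSge
  rw [le_div_iff₀ hD] at hIle
  constructor
  · rw [eq_div_iff hD.ne']
    nlinarith
  · rw [eq_div_iff hD.ne']
    nlinarith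

theorem sup_inf_diam_Deven (k1 k2 : ℕ) (hk1 : 0 < k1) (hk : k1 < k2) :
    sSup (Deven {k1, k2}) = ((2 : ℝ) ^ k2 - 1) / ((2 : ℝ) ^ (k1 + k2) - 1) ∧
    sInf (Deven {k1, k2}) = ((2 : ℝ) ^ k1 - 1) / ((2 : ℝ) ^ (k1 + k2) - 1) ∧
    Metric.diam (Deven {k1, k2}) =
      ((2 : ℝ) ^ k2 - (2 : ℝ) ^ k1) / ((2 : ℝ) ^ (k1 + k2) - 1) := by
  have hK : ∀ k ∈ ({k1, k2} : Set ℕ), 1 ≤ k ∧ k1 ≤ k ∧ k ≤ k2 := by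
    simp only [Set.forall_mem_insert, Set.mem_singleton_iff, forall_eq]; omega
  have hpos k (hk : k ∈ ({k1, k2} : Set ℕ)) := (hK k hk).1
  have hne : ({k1, k2} : Set ℕ).Nonempty := Set.insert_nonempty _ _
  have hbdd := isBounded_Deven hpos
  have hmax : valEven (alternating k1 k2) ∈ Deven {k1, k2} :=
    ⟨_, alternating_mem k1 k2, rfl⟩
  have hmin : valEven (alternating k2 k1) ∈ Deven {k1, k2} :=
    ⟨_, fun i => Set.pair_comm k1 k2 ▸ alternating_mem k2 k1 i, rfl⟩
  rw [valEven_alternating (by omega) (by omega)] at hmax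
  rw [valEven_alternating (by omega) (by omega), add_comm] at hmin
  rw [pow_add] at hmax hmin ⊢
  obtain ⟨hS, hI⟩ := eq_of_recursive_bounds (by positivity) (by positivity)
    (one_lt_mul_of_lt_of_le (one_lt_pow₀ one_lt_two (by omega)) (one_le_pow₀ one_le_two))
    (sSup_Deven_le hpos hne fun k hk => (hK k hk).2.1)
    (le_sInf_Deven hpos hne fun k hk => (hK k hk).2.2)
    (le_csSup hbdd.bddAbove hmax) (csInf_le hbdd.bddBelow hmin)
  refine ⟨hS, hI, ?_⟩
  rw [Real.diam_eq hbdd, hS, hI, div_sub_div_same, sub_sub_sub_cancel_right]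
end
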